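/- arXiv:2401.12718 — 8 statements merged into one kernel-verified Lean document; each statement's English description precedes it below -/
import Mathlib

section
/- For all natural numbers x, y, z, the two 4-element multisets {x+y+z, |x-(y+z)|, x+|y-z|, |x-|y-z||} and {x+y+z, |(x+y)-z|, |x-y|+z, ||x-y|-z|} are equal, where |u-v| denotes the (nonnegative) distance between natural numbers u and v. -/
private lemma quad_perm (a b c d b' c' d' : ℕ)
    (h : b = b' ∧ c = c' ∧ d = d' ∨ b = b' ∧ c = d' ∧ d = c' ∨
         b = c' ∧ c = b' ∧ d = d' ∨ b = c' ∧ c = d' ∧ d = b' ∨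
         b = d' ∧ c = b' ∧ d = c' ∨ b = d' ∧ c = c' ∧ d = b') :
    ({a, b, c, d} : Multiset ℕ) = {a, b', c', d'} := by
  rcases h with ⟨rfl,rfl,rfl⟩|⟨rfl,rfl,rfl⟩|⟨rfl,rfl,rfl⟩|⟨rfl,rfl,rfl⟩|⟨rfl,rfl,rfl⟩|⟨rfl,rfl,rfl⟩
  · rfl
  · exact Quot.sound (.cons a (.cons b (.swap d c _)))
  · exact Quot.sound (.cons a (.swap c b _))
  · exact Quot.sound (.cons a ((List.Perm.cons b (.swap d c _)).trans (.swap d b _)))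
  · exact Quot.sound (.cons a ((List.Perm.swap c b _).trans (.cons c (.swap d b _))))
  · exact Quot.sound (.cons a ((List.Perm.cons b (.swap d c _)).trans ((List.Perm.swap d b _).trans (.cons d (.swap c b _)))))

set_option maxHeartbeats 1000000 in
/-- Associativity of the 2-valued multiplication `x * y = [x + y, |x - y|]`
on the nonnegative integers: the two 4-element multisets coincide. -/
theorem two_valued_mul_assoc (x y z : ℕ) :
    ({x + y + z, Nat.dist x (y + z), x + Nat.dist y z, Nat.dist x (Nat.dist y z)} : Multiset ℕ) =
    ({x + y + z, Nat.dist (x + y) z, Nat.dist x y + z, Nat.dist (Nat.dist x y) z} : Multiset ℕ) := by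
  apply quad_perm
  simp only [Nat.dist]
  omega
end

section
/- For every natural number k, one plus the total number of nonempty words over the two-letter alphabet {a, b} of length at most k that begin with the letter a and contain no three consecutive equal letters equals F_{k+3} - 1. Equivalently, the growth function of the 2-valued coset group of Z/3 * Z/3 satisfies ξ_k = F_{k+3} - 1. -/
/-!
A cubeless word of length `n + 3` beginning with `c` is either `c` followed by a cubeless word of
length `n + 2` beginning with `!c`, or `c c` followed by a cubeless word of length `n + 1`
beginning with `!c`. So the number of cubeless words of length `n + 1` with a prescribed first
letter satisfies the Fibonacci recursion and equals `F (n + 2)`; summing over the lengths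
`1, …, k` gives `F (k + 3) - 2`.
-/

def Cubeless (w : List Bool) : Prop := ∀ c : Bool, ¬ [c, c, c] <:+: w

theorem cubeless_nil : Cubeless [] := fun _ h => by simp at h

theorem cubeless_cons_iff {a : Bool} {w : List Bool} :
    Cubeless (a :: w) ↔ Cubeless w ∧ ¬ [a, a] <+: w := by
  simp only [Cubeless, List.infix_cons_iff, List.cons_prefix_cons, not_or, forall_and]
  constructor
  · rintro ⟨h, hw⟩
    exact ⟨hw, fun ha => h a ⟨rfl, ha⟩⟩
  · rintro ⟨hw, ha⟩
    exact ⟨fun c ⟨hc, hp⟩ => ha (hc ▸ hp), hw⟩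

theorem cubeless_cons_of_head? {a : Bool} {w : List Bool} (hw : w.head? = some (!a)) :
    Cubeless (a :: w) ↔ Cubeless w := by
  obtain ⟨t, rfl⟩ := List.head?_eq_some_iff.1 hw
  simp [cubeless_cons_iff]

theorem cubeless_cons_cons_of_head? {a : Bool} {w : List Bool} (hw : w.head? = some (!a)) :
    Cubeless (a :: a :: w) ↔ Cubeless w := by
  obtain ⟨t, rfl⟩ := List.head?_eq_some_iff.1 hw
  simp [cubeless_cons_iff]

theorem not_cubeless_cons_cons_cons (a : Bool) (w : List Bool) :
    ¬ Cubeless (a :: a :: a :: w) :=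
  fun h => h a (List.prefix_append [a, a, a] w).isInfix

def cubelessOfLength (c : Bool) (n : ℕ) : Set (List Bool) :=
  {w | w.length = n ∧ w.head? = some c ∧ Cubeless w}

theorem cubelessOfLength_finite (c : Bool) (n : ℕ) : (cubelessOfLength c n).Finite :=
  (List.finite_length_eq Bool n).subset fun _ hw => hw.1

theorem cubelessOfLength_one (c : Bool) : cubelessOfLength c 1 = {[c]} := by
  ext w
  rcases w with _ | ⟨x, _ | ⟨y, t⟩⟩ <;>
    simp [cubelessOfLength, cubeless_cons_iff, cubeless_nil]

theorem cubelessOfLength_two (c : Bool) : cubelessOfLength c 2 = {[c, c], [c, !c]} := by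
  ext w
  rcases w with _ | ⟨x, _ | ⟨y, _ | ⟨z, t⟩⟩⟩ <;>
    simp [cubelessOfLength, cubeless_cons_iff, cubeless_nil, ← and_or_left, Bool.eq_or_eq_not]

theorem cubelessOfLength_add_three (c : Bool) (n : ℕ) :
    cubelessOfLength c (n + 3) =
      (c :: ·) '' cubelessOfLength (!c) (n + 2) ∪
        (fun w => c :: c :: w) '' cubelessOfLength (!c) (n + 1) := by
  ext w
  simp only [cubelessOfLength, Set.mem_union, Set.mem_image, Set.mem_ofPred_eq]
  constructor
  · rintro ⟨hl, hh, hw⟩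
    obtain ⟨x, y, z, t, rfl⟩ : ∃ x y z t, w = x :: y :: z :: t := by
      match w, hl with
      | x :: y :: z :: t, _ => exact ⟨x, y, z, t, rfl⟩
    obtain rfl : x = c := by simpa using hh
    rcases Bool.eq_or_eq_not y x with hy | hy <;> subst y
    · rcases Bool.eq_or_eq_not z x with hz | hz <;> subst z
      · exact absurd hw (not_cubeless_cons_cons_cons x t)
      · exact Or.inr ⟨_, ⟨by simpa using hl, rfl, (cubeless_cons_cons_of_head? rfl).1 hw⟩, rfl⟩
    · exact Or.inl ⟨_, ⟨by simpa using hl, rfl, (cubeless_cons_of_head? rfl).1 hw⟩, rfl⟩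
  · rintro (⟨t, ⟨hl, hh, ht⟩, rfl⟩ | ⟨t, ⟨hl, hh, ht⟩, rfl⟩)
    · exact ⟨by simp [hl], rfl, (cubeless_cons_of_head? hh).2 ht⟩
    · exact ⟨by simp [hl], rfl, (cubeless_cons_cons_of_head? hh).2 ht⟩

theorem ncard_cubelessOfLength (c : Bool) :
    ∀ n, (cubelessOfLength c (n + 1)).ncard = Nat.fib (n + 2)
  | 0 => by simp [cubelessOfLength_one]
  | 1 => by rw [cubelessOfLength_two, Set.ncard_pair (by simp)]; rfl
  | n + 2 => by
    have hdisj : Disjoint ((c :: ·) '' cubelessOfLength (!c) (n + 2))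
        ((fun w => c :: c :: w) '' cubelessOfLength (!c) (n + 1)) := by
      refine Set.disjoint_left.2 ?_
      rintro _ ⟨t, ⟨-, ht, -⟩, rfl⟩ ⟨s, -, hs⟩
      obtain rfl := List.cons_injective hs
      simp at ht
    have hinj : Function.Injective fun w : List Bool => c :: c :: w :=
      List.cons_injective.comp List.cons_injective
    rw [cubelessOfLength_add_three, Set.ncard_union_eq hdisj
        ((cubelessOfLength_finite _ _).image _) ((cubelessOfLength_finite _ _).image _),
      Set.ncard_image_of_injective _ List.cons_injective, Set.ncard_image_of_injective _ hinj,
      ncard_cubelessOfLength (!c) (n + 1), ncard_cubelessOfLength (!c) n,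
      Nat.fib_add_two (n := n + 2), add_comm]

def cubelessOfLengthLE (c : Bool) (k : ℕ) : Set (List Bool) :=
  {w | w ≠ [] ∧ w.length ≤ k ∧ w.head? = some c ∧ Cubeless w}

theorem cubelessOfLengthLE_zero (c : Bool) : cubelessOfLengthLE c 0 = ∅ :=
  Set.eq_empty_of_forall_notMem fun _ hw =>
    hw.1 (List.length_eq_zero_iff.1 (Nat.le_zero.1 hw.2.1))

theorem cubelessOfLengthLE_succ (c : Bool) (k : ℕ) :
    cubelessOfLengthLE c (k + 1) = cubelessOfLengthLE c k ∪ cubelessOfLength c (k + 1) := by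
  ext w
  simp only [cubelessOfLengthLE, cubelessOfLength, Set.mem_union, Set.mem_ofPred_eq]
  constructor
  · rintro ⟨hne, hl, hh, hw⟩
    rcases Nat.lt_or_eq_of_le hl with hl | hl
    · exact Or.inl ⟨hne, by omega, hh, hw⟩
    · exact Or.inr ⟨hl, hh, hw⟩
  · rintro (⟨hne, hl, hh, hw⟩ | ⟨hl, hh, hw⟩)
    · exact ⟨hne, by omega, hh, hw⟩
    · exact ⟨by rintro rfl; simp at hh, hl.le, hh, hw⟩

theorem ncard_cubelessOfLengthLE_add_two (c : Bool) (k : ℕ) :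
    (cubelessOfLengthLE c k).ncard + 2 = Nat.fib (k + 3) := by
  induction k with
  | zero => simp [cubelessOfLengthLE_zero, Nat.fib_add_two]
  | succ k ih =>
    have hdisj : Disjoint (cubelessOfLengthLE c k) (cubelessOfLength c (k + 1)) :=
      Set.disjoint_left.2 fun w hw hw' => by
        have := hw.2.1
        have := hw'.1
        omega
    rw [cubelessOfLengthLE_succ, Set.ncard_union_eq hdisj
        ((List.finite_length_le Bool k).subset fun _ hw => hw.2.1) (cubelessOfLength_finite c _),
      ncard_cubelessOfLength, Nat.fib_add_two (n := k + 2), ← ih]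
    omega

/-- One plus the number of nonempty cubeless words over `{a, b}` (encoded as `Bool`,
with `a = false`) of length at most `k` that begin with the letter `a` equals
`F (k + 3) - 1`: the growth function of the 2-valued coset group of `ℤ/3 * ℤ/3`. -/
theorem growth_Z3_Z3 (k : ℕ) :
    1 + Nat.card {w : List Bool //
        w ≠ [] ∧ w.length ≤ k ∧ w.head? = some false ∧ ∀ c : Bool, ¬ [c, c, c] <:+: w} =
      Nat.fib (k + 3) - 1 := by
  have h := ncard_cubelessOfLengthLE_add_two false k
  rw [← Nat.card_coe_set_eq] at h
  change 1 + Nat.card (cubelessOfLengthLE false k) = _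
  omega
end

section
/- For every n ≥ 1, the polynomial χ_n(X) = X^n - X^{n-1} - ... - X - 1 ∈ ℂ[X] has no multiple roots, i.e. it is squarefree (separable). -/
/-!
Multiplying by `X - 1` turns `χₙ` into `g = X^(n+1) - 2 X^n + 1`. At a common root `α` of `g`
and `g'`, the equation `g'(α) = 0` forces `α = 2n/(n+1)`, and then `g(α) = 0` forces
`α^n = (n+1)/2`; together they give `2 (2n)^n = (n+1)^(n+1)`. Since `n + 1` is coprime to `n`,
`(n+1)^(n+1)` then divides `2^(n+1)`, so `n = 1`. Hence `g`, and with it its factor `χₙ`, is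
separable for `n ≠ 1`, while `χ₁ = X - 1`.
-/

open Polynomial

theorem Nat.eq_one_of_two_mul_two_mul_pow_eq_succ_pow_succ {n : ℕ}
    (h : 2 * (2 * n) ^ n = (n + 1) ^ (n + 1)) : n = 1 := by
  have hdvd : (n + 1) ^ (n + 1) ∣ 2 ^ (n + 1) * n ^ n :=
    ⟨1, by rw [mul_one, ← h]; ring⟩
  have hcop : Nat.Coprime ((n + 1) ^ (n + 1)) (n ^ n) :=
    (Nat.coprime_self_add_left.mpr (Nat.coprime_one_left n)).pow _ _
  have h2 : n + 1 ∣ 2 := (Nat.pow_dvd_pow_iff n.succ_ne_zero).mp (hcop.dvd_of_dvd_mul_right hdvd)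
  have hn : n ≠ 0 := by rintro rfl; simp at h
  have := Nat.le_of_dvd two_pos h2
  omega

theorem X_sub_one_mul_X_pow_sub_geom_sum {R : Type*} [CommRing R] (n : ℕ) :
    (X - 1 : R[X]) * (X ^ n - ∑ i ∈ Finset.range n, X ^ i) = X ^ (n + 1) - 2 * X ^ n + 1 := by
  linear_combination -(geom_sum_mul (X : R[X]) n)

variable {K : Type*} [Field K] [CharZero K]

theorem eq_one_of_isRoot_of_isRoot_derivative {n : ℕ} {α : K}
    (hg : (X ^ (n + 1) - 2 * X ^ n + 1 : K[X]).IsRoot α)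
    (hg' : (derivative (X ^ (n + 1) - 2 * X ^ n + 1 : K[X])).IsRoot α) : n = 1 := by
  simp only [IsRoot, eval_add, eval_sub, eval_mul, eval_pow, eval_X, eval_one, eval_ofNat,
    derivative_add, derivative_sub, derivative_mul, derivative_X_pow, derivative_one,
    derivative_ofNat, eval_C, eval_zero] at hg hg'
  have hα : α ≠ 0 := by rintro rfl; rcases n with _ | n <;> norm_num at hg
  have hcrit : ((n + 1) * α - 2 * n) * α ^ n = 0 := by
    rcases n with _ | n
    · simp at hg'
    · simp only [Nat.add_sub_cancel, Nat.cast_add, Nat.cast_one] at hg' ⊢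
      linear_combination α * hg'
  have hα' : (n + 1) * α = 2 * n := by
    linear_combination (mul_eq_zero.mp hcrit).resolve_right (pow_ne_zero n hα)
  have hpow : 2 * α ^ n = n + 1 := by
    linear_combination (-(n + 1 : K)) * hg + α ^ n * hα'
  have hcast : ((2 * (2 * n) ^ n : ℕ) : K) = ((n + 1) ^ (n + 1) : ℕ) := by
    push_cast
    rw [← hα', mul_pow, pow_succ]
    linear_combination (n + 1 : K) ^ n * hpow
  exact Nat.eq_one_of_two_mul_two_mul_pow_eq_succ_pow_succ (Nat.cast_injective hcast)

theorem separable_X_pow_succ_sub_two_mul_X_pow_add_one {n : ℕ} (hn : n ≠ 1) :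
    (X ^ (n + 1) - 2 * X ^ n + 1 : K[X]).Separable := by
  refine (isCoprime_iff_aeval_ne_zero_of_isAlgClosed K (AlgebraicClosure K) _ _).mpr fun α => ?_
  rw [← not_and_or]
  rintro ⟨hg, hg'⟩
  have hmap : (X ^ (n + 1) - 2 * X ^ n + 1 : K[X]).map (algebraMap K (AlgebraicClosure K)) =
      X ^ (n + 1) - 2 * X ^ n + 1 := by
    simp
  rw [aeval_def, eval₂_eq_eval_map, hmap] at hg
  rw [aeval_def, eval₂_eq_eval_map, ← derivative_map, hmap] at hg'
  exact hn (eq_one_of_isRoot_of_isRoot_derivative hg hg')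

theorem nbonacci_char_poly_squarefree_general (n : ℕ) :
    Squarefree ((Polynomial.X : Polynomial ℂ) ^ n - ∑ i ∈ Finset.range n, Polynomial.X ^ i) := by
  rcases eq_or_ne n 1 with rfl | hn
  · simpa using (irreducible_X_sub_C (1 : ℂ)).squarefree
  · have hsep := separable_X_pow_succ_sub_two_mul_X_pow_add_one (K := ℂ) hn
    rw [← X_sub_one_mul_X_pow_sub_geom_sum] at hsep
    exact hsep.of_mul_right.squarefree

/-- For every `n ≥ 1`, the characteristic polynomial
`χₙ(X) = X^n - X^(n-1) - ⋯ - X - 1` of the `n`-bonacci recurrence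
has no multiple roots, i.e. it is squarefree over `ℂ`. -/
theorem nbonacci_char_poly_squarefree (n : ℕ) (hn : 1 ≤ n) :
    Squarefree ((Polynomial.X : Polynomial ℂ) ^ n - ∑ i ∈ Finset.range n, Polynomial.X ^ i) :=
  nbonacci_char_poly_squarefree_general n
end

section
/- For every n ≥ 2, the polynomial χ_n(λ) = λ^n - λ^{n-1} - ... - λ - 1 has exactly one real root r with r > 1, this root satisfies 1 < r < 2, and every complex root λ of χ_n with λ ≠ r satisfies |λ| < 1. -/
/-!
Dividing by `x ^ n`, a nonzero `x` is a root of `χₙ` iff `∑_{j=1}^{n} x⁻ʲ = 1`, and the left side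
is strictly decreasing on `(0, ∞)`; so `χₙ` has exactly one positive root `r`, and `r ∈ (1, 2)`
because `χₙ(1) < 0 < χₙ(2)`. For a complex root `z` with `t = |z| ≥ 1`, the triangle inequality
in `zⁿ = ∑_{i<n} zⁱ` gives `χₙ(t) ≤ 0`, so `(t - 1) χₙ(t) ≤ 0`, i.e. `tⁿ (2 - t) ≥ 1`. On the other
hand `(z - 1) χₙ(z) = 0` reads `zⁿ (2 - z) = 1`, hence `|2 - z| ≤ 2 - |z|`, which forces `z = t`
to be a positive real root, i.e. `z = r`.
-/

open Finset

def nbonacciChar {R : Type*} [Ring R] (n : ℕ) (x : R) : R :=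
  x ^ n - ∑ i ∈ range n, x ^ i

theorem sub_one_mul_nbonacciChar {R : Type*} [CommRing R] (n : ℕ) (x : R) :
    (x - 1) * nbonacciChar n x = x ^ (n + 1) - 2 * x ^ n + 1 := by
  rw [nbonacciChar]
  linear_combination (-1 : R) * geom_sum_mul x n

theorem nbonacciChar_eq_pow_mul {K : Type*} [Field K] (n : ℕ) {x : K} (hx : x ≠ 0) :
    nbonacciChar n x = x ^ n * (1 - ∑ i ∈ range n, x⁻¹ ^ (n - i)) := by
  rw [nbonacciChar, mul_sub, mul_one, mul_sum]
  congr 1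
  refine sum_congr rfl fun i hi => ?_
  rw [← pow_sub_mul_pow x (mem_range.1 hi).le, inv_pow, mul_right_comm,
    mul_inv_cancel₀ (pow_ne_zero _ hx), one_mul]

theorem strictMonoOn_one_sub_sum_inv_pow {n : ℕ} (hn : n ≠ 0) :
    StrictMonoOn (fun t : ℝ => 1 - ∑ i ∈ range n, t⁻¹ ^ (n - i)) (Set.Ioi 0) := by
  intro s hs t ht hst
  have hterm : ∀ i ∈ range n, t⁻¹ ^ (n - i) < s⁻¹ ^ (n - i) := fun i hi =>
    pow_lt_pow_left₀ (inv_strictAnti₀ hs hst) (inv_pos.2 ht).le (by grind)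
  simpa using sum_lt_sum_of_nonempty (nonempty_range_iff.2 hn) hterm

theorem nbonacciChar_nonpos_iff {n : ℕ} (hn : n ≠ 0) {r t : ℝ} (hr : 0 < r)
    (hχr : nbonacciChar n r = 0) (ht : 0 < t) : nbonacciChar n t ≤ 0 ↔ t ≤ r := by
  rw [nbonacciChar_eq_pow_mul n hr.ne', mul_eq_zero, or_iff_right (pow_ne_zero n hr.ne')] at hχr
  rw [nbonacciChar_eq_pow_mul n ht.ne', ← mul_zero (t ^ n), mul_le_mul_iff_right₀ (pow_pos ht n),
    ← hχr]
  exact (strictMonoOn_one_sub_sum_inv_pow hn).le_iff_le ht hr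

theorem exists_nbonacciChar_eq_zero_mem_Ioo {n : ℕ} (hn : 2 ≤ n) :
    ∃ r ∈ Set.Ioo (1 : ℝ) 2, nbonacciChar n r = 0 := by
  have hcont : Continuous (nbonacciChar n : ℝ → ℝ) := by unfold nbonacciChar; fun_prop
  have h1 : nbonacciChar n (1 : ℝ) < 0 := by
    simp only [nbonacciChar, one_pow, sum_const, card_range, nsmul_eq_mul, mul_one]
    linarith [show (2 : ℝ) ≤ n by exact_mod_cast hn]
  have h2 : 0 < nbonacciChar n (2 : ℝ) := by
    rw [nbonacciChar, geom_sum_eq (by norm_num)]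
    norm_num
  exact intermediate_value_Ioo (by norm_num) hcont.continuousOn ⟨h1, h2⟩

theorem Complex.eq_norm_of_norm_add_norm_sub_le {a : ℝ} {z : ℂ} (h : ‖z‖ + ‖(a : ℂ) - z‖ ≤ a) :
    z = ‖z‖ := by
  have hre : z.re = ‖z‖ := by
    have := re_le_norm ((a : ℂ) - z)
    simp only [sub_re, ofReal_re] at this
    linarith [re_le_norm z]
  exact eq_coe_norm_of_nonneg (re_eq_norm.1 hre)

theorem eq_norm_of_nbonacciChar_eq_zero {n : ℕ} {z : ℂ} (hz : nbonacciChar n z = 0)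
    (h1 : 1 ≤ ‖z‖) : z = ‖z‖ := by
  set t := ‖z‖ with ht
  have ht0 : 0 < t := by linarith
  have hχt : nbonacciChar n t ≤ 0 := by
    refine sub_nonpos.2 ?_
    calc t ^ n = ‖z ^ n‖ := (norm_pow z n).symm
      _ = ‖∑ i ∈ range n, z ^ i‖ := by rw [sub_eq_zero.1 hz]
      _ ≤ ∑ i ∈ range n, t ^ i := by simpa only [norm_pow] using norm_sum_le (range n) (z ^ ·)
  have hreal : 1 ≤ t ^ n * (2 - t) := by
    have := sub_one_mul_nbonacciChar n t
    nlinarith [mul_nonpos_of_nonneg_of_nonpos (sub_nonneg.2 h1) hχt, pow_succ t n]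
  have hcomplex : z ^ n * (2 - z) = 1 := by
    linear_combination sub_one_mul_nbonacciChar n z - (z - 1) * hz
  have hnorm : t ^ n * ‖2 - z‖ = 1 := by rw [ht, ← norm_pow, ← norm_mul, hcomplex, norm_one]
  have h2z : ‖2 - z‖ ≤ 2 - t :=
    le_of_mul_le_mul_left (hnorm.trans_le hreal) (pow_pos ht0 n)
  exact Complex.eq_norm_of_norm_add_norm_sub_le (a := 2) (by push_cast; linarith)

/-- For `n ≥ 2`, the polynomial `χₙ(λ) = λ^n - λ^(n-1) - ⋯ - λ - 1` has exactly
one real root `r` with `r > 1`; it satisfies `1 < r < 2`, and every complex root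
different from `r` lies strictly inside the unit circle. -/
theorem nbonacci_char_poly_roots (n : ℕ) (hn : 2 ≤ n) :
    ∃ r : ℝ, 1 < r ∧ r < 2 ∧
      (r ^ n - ∑ i ∈ Finset.range n, r ^ i = 0) ∧
      (∀ s : ℝ, 1 < s → s ^ n - ∑ i ∈ Finset.range n, s ^ i = 0 → s = r) ∧
      (∀ z : ℂ, z ^ n - ∑ i ∈ Finset.range n, z ^ i = 0 → z ≠ (r : ℂ) →
        ‖z‖ < 1) := by
  obtain ⟨r, ⟨hr1, hr2⟩, hr⟩ := exists_nbonacciChar_eq_zero_mem_Ioo hn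
  have hn0 : n ≠ 0 := by omega
  have eq_r : ∀ s : ℝ, 0 < s → nbonacciChar n s = 0 → s = r := fun s hs hχs =>
    le_antisymm ((nbonacciChar_nonpos_iff hn0 (by linarith) hr hs).1 hχs.le)
      ((nbonacciChar_nonpos_iff hn0 hs hχs (by linarith)).1 hr.le)
  refine ⟨r, hr1, hr2, hr, fun s hs hχs => eq_r s (by linarith) hχs, fun z hz hzr => ?_⟩
  by_contra! h1
  have hz_real := eq_norm_of_nbonacciChar_eq_zero hz h1
  have hχ : nbonacciChar n ‖z‖ = 0 := by
    rw [hz_real] at hz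
    unfold nbonacciChar
    exact_mod_cast hz
  exact hzr (by rw [hz_real, eq_r _ (by linarith) hχ])
end

section
/- Let n ≥ 2 and let r be the unique real root with r > 1 of the polynomial χ_n(λ) = λ^n - λ^{n-1} - ... - λ - 1. Then for every natural number k, the k-th n-bonacci number F_k^{(n)} is the nearest integer to ((r-1)/((n+1)r - 2n)) · r^{k-n+1}; that is, |F_k^{(n)} - ((r-1)/((n+1)r - 2n)) · r^{k-n+1}| < 1/2, where r^{k-n+1} is the integer power (possibly with negative exponent) of r. -/
/-!
Let `c` be the constant of the statement and `E k = F k - c r ^ (k - n + 1)` the error, which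
again satisfies the `n`-bonacci recurrence. Writing `χₘ(x) = x ^ m - x ^ (m - 1) - ⋯ - 1`,
the quotient `χₙ(X) / (X - r)` has coefficients `χ_{n-1-j}(r)`, so
`Vₗ = ∑ⱼ χ_{n-1-j}(r) E (l + j)` is multiplied by `r` when `l` increases by one. The constant
`c` is exactly the one making `V₀ = 0`, hence `V` vanishes identically, and subtracting it from
the recurrence gives `E (l + n) = ∑ⱼ (1 - χ_{n-1-j}(r)) E (l + j)`. These weights equal
`(2 - r)(1 + r + ⋯ + r ^ (n - 2 - j)) ≥ 0` and sum to `n - (n - 1) / (r - 1) < 1`, so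
`|E k| < 1 / 2` propagates from the initial values `k < n`, where it amounts to
`1 / 2 < c < 3 / 2` and `2 c < r`.
-/

open Finset

theorem abs_lt_of_eq_sum_mul {n : ℕ} {w E : ℕ → ℝ} {B : ℝ} (hB : 0 < B)
    (hw : ∀ j < n, 0 ≤ w j) (hw1 : ∑ j ∈ range n, w j < 1) (hinit : ∀ k < n, |E k| < B)
    (hrec : ∀ l, E (l + n) = ∑ j ∈ range n, w j * E (l + j)) (k : ℕ) : |E k| < B := by
  induction k using Nat.strong_induction_on with
  | _ k ih =>
  rcases lt_or_ge k n with hk | hk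
  · exact hinit k hk
  obtain ⟨l, rfl⟩ : ∃ l, k = l + n := ⟨k - n, by omega⟩
  have hwj : ∀ j ∈ range n, |w j * E (l + j)| ≤ w j * B := fun j hj => by
    have hj := mem_range.mp hj
    rw [abs_mul, abs_of_nonneg (hw j hj)]
    exact mul_le_mul_of_nonneg_left (ih _ (by omega)).le (hw j hj)
  calc |E (l + n)| ≤ ∑ j ∈ range n, |w j * E (l + j)| := hrec l ▸ abs_sum_le_sum_abs _ _
    _ ≤ (∑ j ∈ range n, w j) * B := sum_mul (range n) w B ▸ sum_le_sum hwj
    _ < B := mul_lt_of_lt_one_left hB hw1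

theorem one_add_mul_le_sum_pow {r : ℝ} (hr : 1 ≤ r) (N : ℕ) :
    1 + N * r ≤ ∑ i ∈ range (N + 1), r ^ i := by
  rw [sum_range_succ', pow_zero, add_comm]
  gcongr
  calc (N : ℝ) * r = ∑ _i ∈ range N, r := by simp
    _ ≤ ∑ i ∈ range N, r ^ (i + 1) := sum_le_sum fun i _ => le_self_pow₀ hr (by omega)

namespace NBonacci

section CommRing

variable {R : Type*} [CommRing R]

def chi (m : ℕ) (x : R) : R := x ^ m - ∑ i ∈ range m, x ^ i

@[simp]
theorem chi_zero (x : R) : chi 0 x = 1 := by simp [chi]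

theorem chi_succ (m : ℕ) (x : R) : chi (m + 1) x = x * chi m x - 1 := by
  simp only [chi, sum_range_succ', pow_succ', pow_zero, ← mul_sum]
  ring

theorem one_sub_chi (m : ℕ) (x : R) : 1 - chi m x = (2 - x) * ∑ i ∈ range m, x ^ i := by
  have h := mul_geom_sum x m
  rw [chi]
  linear_combination h

theorem sub_one_mul_chi (m : ℕ) (x : R) : (x - 1) * chi m x = x ^ (m + 1) - 2 * x ^ m + 1 := by
  have h := mul_geom_sum x m
  rw [chi]
  linear_combination (-1 : R) * h

theorem sum_pow_eq_of_chi_eq_zero {n : ℕ} {x : R} (hx : chi n x = 0) :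
    ∑ i ∈ range n, x ^ i = x ^ n :=
  (sub_eq_zero.mp hx).symm

theorem two_sub_mul_pow_eq_one {n : ℕ} {x : R} (hx : chi n x = 0) : (2 - x) * x ^ n = 1 := by
  have h := one_sub_chi n x
  rw [hx, sum_pow_eq_of_chi_eq_zero hx] at h
  linear_combination -h

theorem sub_one_mul_sum_one_sub_chi (n : ℕ) (x : R) :
    (x - 1) * ∑ m ∈ range n, (1 - chi m x) = (2 - x) * (∑ m ∈ range n, x ^ m - n) := by
  have hterm : ∀ m ∈ range n, (x - 1) * (1 - chi m x) = (2 - x) * (x ^ m - 1) := by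
    intro m _
    rw [one_sub_chi, ← mul_geom_sum]
    ring
  rw [mul_sum, sum_congr rfl hterm, ← mul_sum, sum_sub_distrib, sum_const, card_range,
    nsmul_one]

theorem sub_one_mul_sum_chi_mul_pow {n : ℕ} {x : R} (hn : 1 ≤ n) (hx : chi n x = 0) :
    (x - 1) * ∑ j ∈ range n, chi (n - 1 - j) x * x ^ j
      = x ^ (n - 1) * ((n + 1) * x - 2 * n) := by
  have hterm : ∀ j ∈ range n, (x - 1) * (chi (n - 1 - j) x * x ^ j)
      = x ^ n - 2 * x ^ (n - 1) + x ^ j := by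
    intro j hj
    have hj : j < n := mem_range.mp hj
    rw [← mul_assoc, sub_one_mul_chi, add_mul, sub_mul, mul_assoc, ← pow_add, ← pow_add,
      show n - 1 - j + 1 + j = n by omega, show n - 1 - j + j = n - 1 by omega, one_mul]
  have hpow : x ^ n = x ^ (n - 1) * x := by rw [← pow_succ, Nat.sub_add_cancel hn]
  rw [mul_sum, sum_congr rfl hterm, sum_add_distrib, sum_const, card_range, nsmul_eq_mul,
    sum_pow_eq_of_chi_eq_zero hx, hpow]
  ring

theorem sum_chi_mul_shift_succ {n : ℕ} {x : R} (hx : chi n x = 0) {E : ℕ → R}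
    (hE : ∀ l, E (l + n) = ∑ j ∈ range n, E (l + j)) (l : ℕ) :
    ∑ j ∈ range n, chi (n - 1 - j) x * E (l + 1 + j)
      = x * ∑ j ∈ range n, chi (n - 1 - j) x * E (l + j) := by
  cases n with
  | zero => simp
  | succ N =>
    have hx0 : x * chi N x = 1 := by rw [chi_succ] at hx; linear_combination hx
    have hstep : ∀ j ∈ range N, chi (N - j) x * E (l + 1 + j)
        = x * (chi (N - (j + 1)) x * E (l + (j + 1))) - E (l + (j + 1)) := by
      intro j hj
      rw [show N - j = N - (j + 1) + 1 by have := mem_range.mp hj; omega, chi_succ,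
        show l + 1 + j = l + (j + 1) by ring]
      ring
    have hEl := hE l
    rw [sum_range_succ'] at hEl
    simp only [Nat.add_sub_cancel]
    rw [sum_range_succ, sum_range_succ', sum_congr rfl hstep, sum_sub_distrib, ← mul_sum,
      Nat.sub_self, chi_zero, Nat.sub_zero, mul_add, ← mul_assoc, hx0,
      show l + 1 + N = l + (N + 1) by ring, hEl]
    ring

theorem eq_sum_one_sub_chi_mul {n : ℕ} {x : R} (hx : chi n x = 0) {E : ℕ → R}
    (hE : ∀ l, E (l + n) = ∑ j ∈ range n, E (l + j))
    (h0 : ∑ j ∈ range n, chi (n - 1 - j) x * E j = 0) (l : ℕ) :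
    E (l + n) = ∑ j ∈ range n, (1 - chi (n - 1 - j) x) * E (l + j) := by
  have hV : ∀ l, ∑ j ∈ range n, chi (n - 1 - j) x * E (l + j) = 0 := by
    intro l
    induction l with
    | zero => simpa using h0
    | succ l ih => rw [sum_chi_mul_shift_succ hx hE, ih, mul_zero]
  simp only [sub_mul, one_mul, sum_sub_distrib, hV l, sub_zero, hE l]

theorem sum_chi_mul_eq_one {n : ℕ} (hn : 1 ≤ n) (x : R) {F : ℕ → R}
    (hF0 : ∀ k < n - 1, F k = 0) (hF1 : F (n - 1) = 1) :
    ∑ j ∈ range n, chi (n - 1 - j) x * F j = 1 := by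
  obtain ⟨N, rfl⟩ : ∃ N, n = N + 1 := ⟨n - 1, by omega⟩
  simp only [Nat.add_sub_cancel] at hF0 hF1 ⊢
  rw [sum_range_succ, sum_eq_zero fun j hj => by rw [hF0 j (mem_range.mp hj), mul_zero], hF1,
    Nat.sub_self, chi_zero, mul_one, zero_add]

end CommRing

theorem zpow_add_eq_sum {K : Type*} [Field K] {n : ℕ} {x : K} (hx0 : x ≠ 0) (hx : chi n x = 0)
    (m : ℤ) (l : ℕ) :
    x ^ (((l + n : ℕ) : ℤ) + m) = ∑ j ∈ range n, x ^ (((l + j : ℕ) : ℤ) + m) := by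
  have hshift : ∀ i : ℕ, x ^ (((l + i : ℕ) : ℤ) + m) = x ^ ((l : ℤ) + m) * x ^ i := by
    intro i
    rw [Nat.cast_add, add_right_comm, zpow_add₀ hx0, zpow_natCast]
  simp only [hshift, ← mul_sum, sum_pow_eq_of_chi_eq_zero hx]

section Real

variable {n : ℕ} {r : ℝ}

theorem bounds_of_chi_eq_zero (hn : 2 ≤ n) (hr : 1 < r) (hroot : chi n r = 0) :
    r < 2 ∧ n * (2 - r) < 1 ∧ (n + 1) * r * (2 - r) < 2 := by
  have hprod := two_sub_mul_pow_eq_one hroot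
  obtain ⟨N, rfl⟩ : ∃ N, n = N + 1 := ⟨n - 1, by omega⟩
  have hlow : 1 + N * r ≤ r ^ (N + 1) :=
    sum_pow_eq_of_chi_eq_zero hroot ▸ one_add_mul_le_sum_pow hr.le N
  have hN : (1 : ℝ) ≤ N := by exact_mod_cast (by omega : 1 ≤ N)
  have hr2 : r < 2 := by nlinarith [pow_pos (by linarith : (0 : ℝ) < r) (N + 1)]
  refine ⟨hr2, ?_, ?_⟩ <;> push_cast <;> nlinarith [mul_pos (sub_pos.2 hr2) (sub_pos.2 hr)]

noncomputable def coeff (n : ℕ) (r : ℝ) : ℝ := (r - 1) / ((n + 1) * r - 2 * n)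

theorem coeff_denom_pos (hn : 2 ≤ n) (hr : 1 < r) (hroot : chi n r = 0) :
    0 < (n + 1) * r - 2 * n := by
  obtain ⟨hr2, -, hkey⟩ := bounds_of_chi_eq_zero hn hr hroot
  nlinarith [mul_pos (sub_pos.2 hr2) (sub_pos.2 hr)]

theorem coeff_bounds (hn : 2 ≤ n) (hr : 1 < r) (hroot : chi n r = 0) :
    1 / 2 < coeff n r ∧ coeff n r < 3 / 2 ∧ 2 * coeff n r < r := by
  obtain ⟨hr2, hn2, hkey⟩ := bounds_of_chi_eq_zero hn hr hroot
  have hD := coeff_denom_pos hn hr hroot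
  have hn' : (2 : ℝ) ≤ n := by exact_mod_cast hn
  refine ⟨?_, ?_, ?_⟩
  · rw [coeff, lt_div_iff₀ hD]; nlinarith
  · rw [coeff, div_lt_iff₀ hD]; nlinarith
  · rw [coeff, ← mul_div_assoc, div_lt_iff₀ hD]; nlinarith

theorem coeff_mul_sum_chi_mul_zpow (hn : 2 ≤ n) (hr : 1 < r) (hroot : chi n r = 0) :
    coeff n r * ∑ j ∈ range n, chi (n - 1 - j) r * r ^ ((j : ℤ) + (1 - n)) = 1 := by
  have hr0 : r ≠ 0 := by positivity
  have hD := coeff_denom_pos hn hr hroot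
  have hsplit : ∀ j : ℕ, chi (n - 1 - j) r * r ^ ((j : ℤ) + (1 - n))
      = chi (n - 1 - j) r * r ^ j * r ^ ((1 : ℤ) - n) := fun j => by
    rw [zpow_add₀ hr0, zpow_natCast, mul_assoc]
  have hcancel : r ^ (n - 1) * r ^ ((1 : ℤ) - n) = 1 := by
    rw [← zpow_natCast, ← zpow_add₀ hr0, show ((n - 1 : ℕ) : ℤ) + (1 - n) = 0 by omega,
      zpow_zero]
  rw [sum_congr rfl fun j _ => hsplit j, ← sum_mul, ← mul_assoc, coeff, div_mul_eq_mul_div,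
    sub_one_mul_sum_chi_mul_pow (by omega) hroot, mul_div_assoc, div_self hD.ne', mul_one,
    hcancel]

theorem one_sub_chi_nonneg (m : ℕ) (h0 : 0 ≤ r) (h2 : r ≤ 2) : 0 ≤ 1 - chi m r := by
  rw [one_sub_chi]
  exact mul_nonneg (by linarith) (sum_nonneg fun i _ => pow_nonneg h0 i)

theorem sum_one_sub_chi_lt_one (hn : 2 ≤ n) (hr : 1 < r) (hroot : chi n r = 0) :
    ∑ j ∈ range n, (1 - chi (n - 1 - j) r) < 1 := by
  obtain ⟨hr2, -, -⟩ := bounds_of_chi_eq_zero hn hr hroot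
  have hn' : (2 : ℝ) ≤ n := by exact_mod_cast hn
  have h := sub_one_mul_sum_one_sub_chi n r
  rw [sum_pow_eq_of_chi_eq_zero hroot, mul_sub, two_sub_mul_pow_eq_one hroot] at h
  rw [sum_range_reflect (fun m => 1 - chi m r) n]
  refine lt_of_mul_lt_mul_left ?_ (sub_pos.2 hr).le
  rw [h]
  nlinarith

theorem abs_sub_coeff_mul_zpow_lt_half (hn : 2 ≤ n) (hr : 1 < r) (hroot : chi n r = 0)
    {F : ℕ → ℕ} (hF0 : ∀ k < n - 1, F k = 0) (hF1 : F (n - 1) = 1) {k : ℕ} (hk : k < n) :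
    |(F k : ℝ) - coeff n r * r ^ ((k : ℤ) - n + 1)| < 1 / 2 := by
  obtain ⟨hc1, hc2, hcr⟩ := coeff_bounds hn hr hroot
  rcases (Nat.le_sub_one_of_lt hk).lt_or_eq with hk' | rfl
  · rw [hF0 k hk', Nat.cast_zero, zero_sub, abs_neg, abs_of_pos (by positivity)]
    calc coeff n r * r ^ ((k : ℤ) - n + 1) ≤ coeff n r * r ^ (-1 : ℤ) := by
          gcongr
          · exact hr.le
          · omega
      _ < 1 / 2 := by
          rw [zpow_neg_one, ← div_eq_mul_inv, div_lt_iff₀ (by positivity)]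
          linarith
  · rw [hF1, show ((n - 1 : ℕ) : ℤ) - n + 1 = 0 by omega, zpow_zero, mul_one, Nat.cast_one,
      abs_lt]
    constructor <;> linarith

end Real

end NBonacci

open NBonacci

/-- Du–Dresden: the `k`-th `n`-bonacci number is the nearest integer to
`((r - 1) / ((n + 1) r - 2 n)) · r ^ (k - n + 1)`, where `r > 1` is the unique
real root of `χₙ(λ) = λ^n - λ^(n-1) - ⋯ - λ - 1` with `r > 1` and the exponent
is an integer power. -/
theorem nbonacci_nearest_integer (n : ℕ) (hn : 2 ≤ n) (F : ℕ → ℕ)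
    (hF0 : ∀ k < n - 1, F k = 0) (hF1 : F (n - 1) = 1)
    (hFrec : ∀ k : ℕ, F (k + n) = ∑ i ∈ Finset.range n, F (k + i))
    (r : ℝ) (hr : 1 < r)
    (hroot : r ^ n - ∑ i ∈ Finset.range n, r ^ i = 0) :
    ∀ k : ℕ,
      |(F k : ℝ) - ((r - 1) / ((n + 1) * r - 2 * n)) * r ^ ((k : ℤ) - n + 1)| < 1 / 2 := by
  intro k
  have hchi : chi n r = 0 := hroot
  have hexp : ∀ k : ℕ, (k : ℤ) - n + 1 = k + (1 - n) := fun k => by ring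
  set E : ℕ → ℝ := fun k => (F k : ℝ) - coeff n r * r ^ ((k : ℤ) + (1 - n))
  have hE : ∀ l, E (l + n) = ∑ j ∈ range n, E (l + j) := fun l => by
    simp only [E, sum_sub_distrib, ← mul_sum, ← zpow_add_eq_sum (by positivity) hchi, hFrec,
      Nat.cast_sum]
  have hE0 : ∑ j ∈ range n, chi (n - 1 - j) r * E j = 0 := by
    have hF : ∑ j ∈ range n, chi (n - 1 - j) r * (F j : ℝ) = 1 :=
      sum_chi_mul_eq_one (by omega) r (by simpa using hF0) (by simpa using hF1)
    simp only [E, mul_sub, sum_sub_distrib, hF, mul_left_comm _ (coeff n r), ← mul_sum,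
      coeff_mul_sum_chi_mul_zpow hn hr hchi, sub_self]
  have hbound := abs_lt_of_eq_sum_mul (by norm_num)
    (fun j _ => one_sub_chi_nonneg _ (by positivity) (bounds_of_chi_eq_zero hn hr hchi).1.le)
    (sum_one_sub_chi_lt_one hn hr hchi)
    (fun k hk => hexp k ▸ abs_sub_coeff_mul_zpow_lt_half hn hr hchi hF0 hF1 hk)
    (eq_sum_one_sub_chi_mul hchi hE hE0) k
  rw [hexp]
  exact hbound
end

section
/- Let n ≥ 1. For every natural number k, the number of compositions of k into parts from the set {1, 2, ..., n} (finite ordered sequences of elements of {1,...,n} summing to k) equals the n-bonacci number F_{k+n-1}^{(n)}. -/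
/-!
Splitting off the first part `p ∈ {1, …, n}` shows that the number `c k` of compositions of `k`
satisfies `c 0 = 1` and `c (k + 1) = ∑_{j < min n (k + 1)} c (k - j)`. The shifted sequence
`k ↦ F (k + n - 1)` obeys the same recursion, because in the `n`-bonacci sum the terms that would
reach below index `k = 0` are the initial zeros `F 0 = … = F (n - 2) = 0`.
-/

open Finset

def compositionsWith (P : Finset ℕ) : ℕ → Finset (List ℕ)
  | 0 => {[]}
  | k + 1 => ({i ∈ range (k + 1) | i + 1 ∈ P}).biUnion fun i =>
      (compositionsWith P (k - i)).image (List.cons (i + 1))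

theorem mem_compositionsWith {P : Finset ℕ} {k : ℕ} {l : List ℕ} :
    l ∈ compositionsWith P k ↔ (∀ x ∈ l, 0 < x ∧ x ∈ P) ∧ l.sum = k := by
  induction k using Nat.strong_induction_on generalizing l with
  | _ k ih =>
  cases k with
  | zero =>
    cases l with
    | nil => simp [compositionsWith]
    | cons a t => simp [compositionsWith]; omega
  | succ k =>
    cases l with
    | nil => simp [compositionsWith]
    | cons a t =>
      simp only [compositionsWith, mem_biUnion, mem_filter, mem_range, mem_image,
        List.cons.injEq, List.forall_mem_cons, List.sum_cons]
      constructor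
      · rintro ⟨i, ⟨hik, hiP⟩, t', ht', rfl, rfl⟩
        obtain ⟨hparts, hsum⟩ := (ih _ (by omega)).1 ht'
        exact ⟨⟨⟨i.succ_pos, hiP⟩, hparts⟩, by omega⟩
      · rintro ⟨⟨⟨ha, haP⟩, hparts⟩, hsum⟩
        refine ⟨a - 1, ⟨by omega, by rwa [Nat.sub_add_cancel ha]⟩, t,
          (ih _ (by omega)).2 ⟨hparts, by omega⟩, by omega, rfl⟩

theorem card_compositionsWith_succ (P : Finset ℕ) (k : ℕ) :
    #(compositionsWith P (k + 1)) =
      ∑ i ∈ range (k + 1) with i + 1 ∈ P, #(compositionsWith P (k - i)) := by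
  rw [compositionsWith, card_biUnion]
  · exact sum_congr rfl fun i _ => card_image_of_injective _ List.cons_injective
  · intro i _ j _ hij
    simp only [Function.onFun, disjoint_left, mem_image]
    rintro _ ⟨l, -, rfl⟩ ⟨l', -, h⟩
    exact hij (by simpa using (List.cons.inj h).1.symm)

theorem filter_range_succ_mem_Icc (n k : ℕ) :
    {i ∈ range (k + 1) | i + 1 ∈ Icc 1 n} = range (min n (k + 1)) := by
  ext i
  simp only [mem_filter, mem_range, mem_Icc, lt_min_iff]
  omega

theorem nbonacci_add_eq_sum {n : ℕ} {F : ℕ → ℕ} (hF0 : ∀ k < n - 1, F k = 0)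
    (hFrec : ∀ k : ℕ, F (k + n) = ∑ i ∈ range n, F (k + i)) (k : ℕ) :
    F (k + n) = ∑ j ∈ range (min n (k + 1)), F (k - j + n - 1) := by
  rw [hFrec, ← sum_range_reflect]
  -- terms with `j > k` have index below `n - 1`
  rw [← sum_subset (range_subset_range.2 (min_le_left n (k + 1))) fun j hj hjk => hF0 _ (by
    simp only [mem_range, lt_min_iff, not_and_or, not_lt] at hj hjk; omega)]
  refine sum_congr rfl fun j hj => congrArg F ?_
  simp only [mem_range, lt_min_iff] at hj
  omega

theorem card_compositions_nbonacci_general (n : ℕ) (F : ℕ → ℕ)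
    (hF0 : ∀ k < n - 1, F k = 0) (hF1 : F (n - 1) = 1)
    (hFrec : ∀ k : ℕ, F (k + n) = ∑ i ∈ Finset.range n, F (k + i)) :
    ∀ k : ℕ,
      Nat.card {l : List ℕ // (∀ x ∈ l, 1 ≤ x ∧ x ≤ n) ∧ l.sum = k} = F (k + n - 1) := by
  have hcard : ∀ k, #(compositionsWith (Icc 1 n) k) = F (k + n - 1) := by
    intro k
    induction k using Nat.strong_induction_on with
    | _ k ih =>
    cases k with
    | zero => simpa [compositionsWith] using hF1.symm
    | succ k =>
      rw [card_compositionsWith_succ, filter_range_succ_mem_Icc, Nat.add_right_comm,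
        Nat.add_sub_cancel, nbonacci_add_eq_sum hF0 hFrec]
      exact sum_congr rfl fun j _ => ih _ (by omega)
  intro k
  rw [← hcard, ← Nat.card_eq_finsetCard]
  refine Nat.card_congr (Equiv.subtypeEquivRight fun l => ?_)
  rw [mem_compositionsWith]
  refine and_congr_left' (forall₂_congr fun x _ => ?_)
  rw [mem_Icc]
  omega

/-- The number of compositions of `k` into parts from `{1, 2, …, n}` equals the
`n`-bonacci number `F (k + n - 1)`. -/
theorem card_compositions_nbonacci (n : ℕ) (hn : 1 ≤ n) (F : ℕ → ℕ)
    (hF0 : ∀ k < n - 1, F k = 0) (hF1 : F (n - 1) = 1)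
    (hFrec : ∀ k : ℕ, F (k + n) = ∑ i ∈ Finset.range n, F (k + i)) :
    ∀ k : ℕ,
      Nat.card {l : List ℕ // (∀ x ∈ l, 1 ≤ x ∧ x ≤ n) ∧ l.sum = k} = F (k + n - 1) :=
  card_compositions_nbonacci_general n F hF0 hF1 hFrec
end

section
/- Let m ≥ 3 and let r be the unique real root with r > 1 of λ^{m-1} - λ^{m-2} - ... - λ - 1. For each k let ξ_k = Σ_{i=0}^{k} S_i, where S_i is the number of compositions of i into parts from {1, 2, ..., m-1}. Then ξ_k ~ r^{k+1}/(m·r - 2(m-1)) as k → ∞; that is, the sequence ξ_k · (m·r - 2(m-1)) / r^{k+1} tends to 1 as k → ∞. -/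
/-!
Put `x = r⁻¹`. Splitting off the first part of a composition gives
`S (n + 1) = ∑_{j < m - 1} S (n - j)` (with `S` vanishing at negative times), so `u n = S n * x ^ n`
solves the renewal equation `u (n + 1) = ∑_{j < m - 1} x ^ (j + 1) * u (n - j)`, whose weights sum
to `1` precisely because `r` is a root. As all weights are positive, the maximum of `u` over the
last `m - 1` times never increases, the minimum never decreases, and their gap shrinks by the
factor `1 - x ^ (2 (m - 1))` every `m - 1` steps; so `u` converges. The window sum weighted by
the tails `∑_{i ≥ j} x ^ (i + 1)` of the weights is constant, which identifies the limit as
`1 / μ`, `μ` the mean of the weights. The same tail-weighted window sum, taken for `S` with unit weights, equals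
`(m - 2) ξ n + 1`, so `ξ n * x ^ n` converges as well, and the root equation turns
`(m r - 2 (m - 1))` into `μ (r - 1)`.
-/

open Finset Filter Topology

/-- `lag s n j` is the value of `s` at time `n - j`, with `s` extended by `0` to negative times. -/
def lag {R : Type*} [Zero R] (s : ℕ → R) (n j : ℕ) : R := if j ≤ n then s (n - j) else 0

def RenewalEq {R : Type*} [Semiring R] (c : ℕ → R) (K : ℕ) (s : ℕ → R) : Prop :=
  ∀ n, s (n + 1) = ∑ j ∈ range K, c j * lag s n j

def tailSum {R : Type*} [AddCommMonoid R] (c : ℕ → R) (K j : ℕ) : R := ∑ i ∈ Ico j K, c i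

section Lag

variable {R : Type*}

@[simp]
lemma lag_zero_right [Zero R] (s : ℕ → R) (n : ℕ) : lag s n 0 = s n := by simp [lag]

@[simp]
lemma lag_succ_succ [Zero R] (s : ℕ → R) (n j : ℕ) : lag s (n + 1) (j + 1) = lag s n j := by
  simp [lag]

lemma lag_neg [SubtractionMonoid R] (s : ℕ → R) (n j : ℕ) : lag (-s) n j = -lag s n j := by
  unfold lag; split_ifs <;> simp

lemma lag_map {R' : Type*} [Semiring R] [Semiring R'] (f : R →+* R') (s : ℕ → R) (n j : ℕ) :
    lag (f ∘ s) n j = f (lag s n j) := by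
  unfold lag; split_ifs <;> simp

lemma pow_mul_lag [CommSemiring R] (s : ℕ → R) (x : R) (n j : ℕ) :
    x ^ n * lag s n j = x ^ j * lag (fun i => s i * x ^ i) n j := by
  unfold lag
  split_ifs with h
  · rw [← Nat.add_sub_cancel' h, pow_add, Nat.add_sub_cancel_left]; ring
  · simp

lemma tendsto_lag [TopologicalSpace R] [Zero R] {s : ℕ → R} {L : R}
    (h : Tendsto s atTop (𝓝 L)) (j : ℕ) : Tendsto (fun n => lag s n j) atTop (𝓝 L) :=
  (h.comp (tendsto_sub_atTop_nat j)).congr' <| by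
    filter_upwards [eventually_ge_atTop j] with n hn
    simp [lag, hn]

end Lag

namespace RenewalEq

variable {R : Type*} {K : ℕ}

lemma neg [Ring R] {c s : ℕ → R} (hs : RenewalEq c K s) : RenewalEq c K (-s) := fun n => by
  simp [hs n, lag_neg, ← sum_neg_distrib]

lemma map {R' : Type*} [Semiring R] [Semiring R'] {c s : ℕ → R} (hs : RenewalEq c K s)
    (f : R →+* R') : RenewalEq (f ∘ c) K (f ∘ s) := fun n => by
  simp [hs n, lag_map, map_sum]

lemma mul_pow [CommSemiring R] {c s : ℕ → R} (hs : RenewalEq c K s) (x : R) :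
    RenewalEq (fun j => c j * x ^ (j + 1)) K (fun n => s n * x ^ n) := fun n => by
  simp only [hs n, sum_mul]
  refine sum_congr rfl fun j _ => ?_
  rw [mul_assoc, mul_comm (lag s n j), pow_succ', mul_assoc, pow_mul_lag]; ring

/-- Each step changes the tail-weighted window sum by `(tailSum c K 0 - 1) * s (n + 1)`. -/
lemma sum_tailSum_mul_lag [CommRing R] {c s : ℕ → R} (hs : RenewalEq c K s) (n : ℕ) :
    ∑ j ∈ range K, tailSum c K j * lag s n j
      = s 0 + (tailSum c K 0 - 1) * ∑ i ∈ range (n + 1), s i := by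
  induction n with
  | zero =>
    rw [sum_eq_single 0 (fun j _ hj => by simp [lag, hj]) (fun h => by simp_all [tailSum])]
    simp only [lag_zero_right, zero_add, sum_range_one]; ring
  | succ n ih =>
    have hshift : ∀ f : ℕ → R, f K = 0 → ∑ j ∈ range K, f j = f 0 + ∑ j ∈ range K, f (j + 1) :=
      fun f hf => by
        have h1 := sum_range_succ f K
        have h2 := sum_range_succ' f K
        rw [hf, add_zero] at h1
        rw [← h1, h2, add_comm]
    have hstep : ∑ j ∈ range K, tailSum c K j * lag s n j
        = s (n + 1) + ∑ j ∈ range K, tailSum c K (j + 1) * lag s n j := by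
      rw [hs n, ← sum_add_distrib]
      refine sum_congr rfl fun j hj => ?_
      simp only [tailSum]
      rw [sum_eq_sum_Ico_succ_bot (mem_range.1 hj), add_mul]
    rw [hshift _ (by simp [tailSum]), sum_range_succ, lag_zero_right]
    simp only [lag_succ_succ]
    linear_combination ih - hstep

end RenewalEq

lemma sum_tailSum_mul_pow {R : Type*} [CommSemiring R] (c : ℕ → R) (K : ℕ) (x : R) :
    ∑ j ∈ range K, tailSum c K j * x ^ j = ∑ i ∈ range K, c i * ∑ j ∈ range (i + 1), x ^ j := by
  simp only [tailSum, sum_mul, mul_sum]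
  exact sum_comm' fun j i => by simp only [mem_range, mem_Ico]; omega

lemma one_le_sum_tailSum {p : ℕ → ℝ} {K : ℕ} (hp : ∀ j ∈ range (K + 1), 0 ≤ p j)
    (hp1 : ∑ j ∈ range (K + 1), p j = 1) : 1 ≤ ∑ j ∈ range (K + 1), tailSum p (K + 1) j := by
  have h := single_le_sum (f := tailSum p (K + 1)) (fun j _ => sum_nonneg fun i hi =>
    hp i (mem_range.2 (mem_Ico.1 hi).2)) (mem_range.2 K.succ_pos)
  rwa [tailSum, ← range_eq_Ico, hp1] at h

noncomputable def windowMax (u : ℕ → ℝ) (K n : ℕ) : ℝ :=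
  (range (K + 1)).sup' nonempty_range_add_one (lag u n)

noncomputable def windowOsc (u : ℕ → ℝ) (K n : ℕ) : ℝ := windowMax u K n + windowMax (-u) K n

section Window

variable {u : ℕ → ℝ} {K : ℕ}

lemma lag_le_windowMax {n j : ℕ} (hj : j ≤ K) : lag u n j ≤ windowMax u K n :=
  le_sup' (lag u n) (mem_range.2 (Nat.lt_succ_of_le hj))

lemma le_windowMax (n : ℕ) : u n ≤ windowMax u K n := by
  simpa using lag_le_windowMax (u := u) (n := n) (Nat.zero_le K)

lemma windowOsc_nonneg (n : ℕ) : 0 ≤ windowOsc u K n := by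
  have h := le_windowMax (u := -u) (K := K) n
  have := le_windowMax (u := u) (K := K) n
  simp only [Pi.neg_apply] at h
  unfold windowOsc; linarith

variable {p : ℕ → ℝ} {δ : ℝ} (hδ : 0 ≤ δ) (hpδ : ∀ j ∈ range (K + 1), δ ≤ p j)
  (hp1 : ∑ j ∈ range (K + 1), p j = 1)

include hδ hpδ hp1 in
lemma le_one_of_forall_le_of_sum_eq_one : δ ≤ 1 :=
  (hpδ 0 (by simp)).trans (hp1 ▸ single_le_sum (fun i hi => hδ.trans (hpδ i hi)) (by simp))

variable (hu : RenewalEq p (K + 1) u)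
include hδ hpδ hp1 hu

lemma succ_le_windowMax_sub {n j : ℕ} (hj : j ≤ K) :
    u (n + 1) ≤ windowMax u K n - δ * (windowMax u K n - lag u n j) := by
  set M := windowMax u K n
  have hgap : ∀ i ∈ range (K + 1), 0 ≤ p i * (M - lag u n i) := fun i hi =>
    mul_nonneg (hδ.trans (hpδ i hi)) (sub_nonneg.2 (lag_le_windowMax (mem_range_succ_iff.1 hi)))
  have hj' : j ∈ range (K + 1) := mem_range_succ_iff.2 hj
  have hsingle := single_le_sum hgap hj'
  have hsum : ∑ i ∈ range (K + 1), p i * (M - lag u n i) = M - u (n + 1) := by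
    simp only [mul_sub, sum_sub_distrib, ← sum_mul, hp1, one_mul, hu n]
  have hδj : δ * (M - lag u n j) ≤ p j * (M - lag u n j) :=
    mul_le_mul_of_nonneg_right (hpδ j hj') (sub_nonneg.2 (lag_le_windowMax hj))
  linarith

lemma succ_le_windowMax (n : ℕ) : u (n + 1) ≤ windowMax u K n := by
  have h := succ_le_windowMax_sub hδ hpδ hp1 hu (n := n) (Nat.zero_le K)
  have := le_windowMax (u := u) (K := K) n
  rw [lag_zero_right] at h
  nlinarith

lemma windowMax_antitone : Antitone (windowMax u K) := by
  refine antitone_nat_of_succ_le fun n => sup'_le _ _ fun j hj => ?_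
  cases j with
  | zero => simpa using succ_le_windowMax hδ hpδ hp1 hu n
  | succ j => simpa using lag_le_windowMax (u := u) (n := n) (by have := mem_range.1 hj; omega)

/-- Since the window minimum carries weight at least `δ`, `u (n + 1)` lies `δ * windowOsc` below
the maximum; it stays in the window for the next `K` steps and pulls each of them down by `δ`
times that amount. -/
lemma windowMax_add_le (n : ℕ) :
    windowMax u K (n + (K + 1)) ≤ windowMax u K n - δ ^ 2 * windowOsc u K n := by
  set M := windowMax u K n
  have hδ1 := le_one_of_forall_le_of_sum_eq_one hδ hpδ hp1
  obtain ⟨j₀, hj₀, hmin⟩ := exists_mem_eq_sup' (nonempty_range_add_one (n := K)) (lag (-u) n)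
  have hfirst : u (n + 1) ≤ M - δ * windowOsc u K n := by
    have := succ_le_windowMax_sub hδ hpδ hp1 hu (n := n) (mem_range_succ_iff.1 hj₀)
    rw [windowOsc, show windowMax (-u) K n = -lag u n j₀ by rw [windowMax, hmin, lag_neg]]
    linarith
  have hosc := windowOsc_nonneg (u := u) (K := K) n
  have hlater : ∀ t ≤ K, u (n + t + 1) ≤ M - δ ^ 2 * windowOsc u K n := by
    rintro (_ | t) ht
    · nlinarith [mul_nonneg (sub_nonneg.2 hδ1) (mul_nonneg hδ hosc)]
    · have hstep := succ_le_windowMax_sub hδ hpδ hp1 hu (n := n + t + 1) (j := t) (by omega)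
      have hlag : lag u (n + t + 1) t = u (n + 1) := by
        rw [lag, if_pos (by omega), show n + t + 1 - t = n + 1 by omega]
      have hanti := windowMax_antitone hδ hpδ hp1 hu (show n ≤ n + t + 1 by omega)
      rw [hlag] at hstep
      rw [show n + (t + 1) + 1 = n + t + 1 + 1 by ring]
      nlinarith [mul_le_mul_of_nonneg_left hanti (sub_nonneg.2 hδ1)]
  refine sup'_le _ _ fun j hj => ?_
  have hj : j ≤ K := mem_range_succ_iff.1 hj
  rw [lag, if_pos (by omega), show n + (K + 1) - j = n + (K - j) + 1 by omega]
  exact hlater (K - j) (by omega)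

lemma windowOsc_add_le (n : ℕ) :
    windowOsc u K (n + (K + 1)) ≤ (1 - δ ^ 2) * windowOsc u K n := by
  have h := windowMax_add_le hδ hpδ hp1 hu n
  have h' := windowMax_antitone hδ hpδ hp1 hu.neg (show n ≤ n + (K + 1) by omega)
  unfold windowOsc at *
  linarith

lemma windowOsc_antitone : Antitone (windowOsc u K) := fun _ _ h =>
  add_le_add (windowMax_antitone hδ hpδ hp1 hu h) (windowMax_antitone hδ hpδ hp1 hu.neg h)

lemma windowOsc_le_pow (k : ℕ) :
    windowOsc u K (k * (K + 1)) ≤ (1 - δ ^ 2) ^ k * windowOsc u K 0 := by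
  induction k with
  | zero => simp
  | succ k ih =>
    have hδ1 : δ ^ 2 ≤ 1 := pow_le_one₀ hδ (le_one_of_forall_le_of_sum_eq_one hδ hpδ hp1)
    calc windowOsc u K ((k + 1) * (K + 1)) ≤ (1 - δ ^ 2) * windowOsc u K (k * (K + 1)) := by
          rw [add_mul, one_mul]; exact windowOsc_add_le hδ hpδ hp1 hu _
      _ ≤ (1 - δ ^ 2) * ((1 - δ ^ 2) ^ k * windowOsc u K 0) :=
          mul_le_mul_of_nonneg_left ih (by linarith)
      _ = (1 - δ ^ 2) ^ (k + 1) * windowOsc u K 0 := by ring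

end Window

namespace RenewalEq

variable {K : ℕ} {p u : ℕ → ℝ}

lemma tendsto_windowOsc {δ : ℝ} (hδ : 0 < δ) (hpδ : ∀ j ∈ range (K + 1), δ ≤ p j)
    (hp1 : ∑ j ∈ range (K + 1), p j = 1) (hu : RenewalEq p (K + 1) u) :
    Tendsto (windowOsc u K) atTop (𝓝 0) := by
  have hδ1 := le_one_of_forall_le_of_sum_eq_one hδ.le hpδ hp1
  have hgeom : Tendsto (fun n => (1 - δ ^ 2) ^ (n / (K + 1)) * windowOsc u K 0) atTop (𝓝 0) := by
    simpa using ((tendsto_pow_atTop_nhds_zero_of_lt_one (by nlinarith) (by nlinarith)).comp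
      (Nat.tendsto_div_const_atTop K.succ_ne_zero)).mul_const (windowOsc u K 0)
  refine squeeze_zero windowOsc_nonneg (fun n => ?_) hgeom
  calc windowOsc u K n ≤ windowOsc u K (n / (K + 1) * (K + 1)) :=
        windowOsc_antitone hδ.le hpδ hp1 hu (Nat.div_mul_le_self n (K + 1))
    _ ≤ _ := windowOsc_le_pow hδ.le hpδ hp1 hu _

lemma exists_tendsto (hp : ∀ j ∈ range (K + 1), 0 < p j) (hp1 : ∑ j ∈ range (K + 1), p j = 1)
    (hu : RenewalEq p (K + 1) u) : ∃ L, Tendsto u atTop (𝓝 L) := by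
  obtain ⟨j₀, hj₀, hmin⟩ := (range (K + 1)).exists_min_image p nonempty_range_add_one
  have hδ := hp j₀ hj₀
  refine cauchySeq_tendsto_of_complete <| cauchySeq_of_le_tendsto_0 _ (fun a b N ha hb => ?_)
    (tendsto_windowOsc hδ hmin hp1 hu)
  have hbound : ∀ n, N ≤ n → u n ≤ windowMax u K N ∧ -u n ≤ windowMax (-u) K N := fun n hn =>
    ⟨le_windowMax n |>.trans (windowMax_antitone hδ.le hmin hp1 hu hn),
      le_windowMax (u := -u) n |>.trans (windowMax_antitone hδ.le hmin hp1 hu.neg hn)⟩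
  obtain ⟨ha₁, ha₂⟩ := hbound a ha
  obtain ⟨hb₁, hb₂⟩ := hbound b hb
  rw [Real.dist_eq, abs_le, windowOsc]
  constructor <;> linarith

/-- The discrete renewal theorem for positive weights on lags `0, …, K`;
`∑ j, tailSum p (K + 1) j` is the mean of the kernel. -/
theorem tendsto_inv_sum_tailSum (hp : ∀ j ∈ range (K + 1), 0 < p j)
    (hp1 : ∑ j ∈ range (K + 1), p j = 1) (hu : RenewalEq p (K + 1) u) (hu0 : u 0 = 1) :
    Tendsto u atTop (𝓝 (∑ j ∈ range (K + 1), tailSum p (K + 1) j)⁻¹) := by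
  obtain ⟨L, hL⟩ := hu.exists_tendsto hp hp1
  have hconst : ∀ n, ∑ j ∈ range (K + 1), tailSum p (K + 1) j * lag u n j = 1 := fun n => by
    rw [hu.sum_tailSum_mul_lag, tailSum, ← range_eq_Ico, hp1, hu0]; ring
  have hlim : Tendsto (fun n => ∑ j ∈ range (K + 1), tailSum p (K + 1) j * lag u n j) atTop
      (𝓝 (∑ j ∈ range (K + 1), tailSum p (K + 1) j * L)) :=
    tendsto_finsetSum _ fun j _ => (tendsto_lag hL j).const_mul _
  simp only [hconst, ← sum_mul] at hlim
  rwa [← eq_inv_of_mul_eq_one_right (tendsto_nhds_unique tendsto_const_nhds hlim).symm]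

lemma tendsto_sum_range_mul_pow {c s : ℕ → ℝ} (hs : RenewalEq c K s) (hc : tailSum c K 0 ≠ 1)
    {x L : ℝ} (hx : Tendsto (fun n => x ^ n) atTop (𝓝 0))
    (hL : Tendsto (fun n => s n * x ^ n) atTop (𝓝 L)) :
    Tendsto (fun n => (∑ i ∈ range (n + 1), s i) * x ^ n) atTop
      (𝓝 ((∑ j ∈ range K, tailSum c K j * x ^ j) * L / (tailSum c K 0 - 1))) := by
  have hc' : tailSum c K 0 - 1 ≠ 0 := sub_ne_zero.2 hc
  have hid : ∀ n, (∑ i ∈ range (n + 1), s i) * x ^ n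
      = (∑ j ∈ range K, tailSum c K j * x ^ j * lag (fun i => s i * x ^ i) n j - s 0 * x ^ n)
        / (tailSum c K 0 - 1) := by
    intro n
    have h := congrArg (· * x ^ n) (hs.sum_tailSum_mul_lag n)
    have hterm : ∀ j, tailSum c K j * lag s n j * x ^ n
        = tailSum c K j * x ^ j * lag (fun i => s i * x ^ i) n j := fun j => by
      rw [mul_assoc, mul_comm (lag s n j), pow_mul_lag, mul_assoc]
    simp only [sum_mul, hterm] at h
    field_simp
    linear_combination -h
  have hlim := ((tendsto_finsetSum (range K) fun j _ =>
    (tendsto_lag hL j).const_mul (tailSum c K j * x ^ j)).sub (hx.const_mul (s 0))).div_const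
    (tailSum c K 0 - 1)
  simp only [hid, mul_zero, sub_zero, ← sum_mul] at hlim ⊢
  exact hlim

end RenewalEq

lemma one_sub_mul_sum_range_succ_mul_pow_succ {R : Type*} [CommRing R] (x : R) (n : ℕ) :
    (1 - x) * ∑ i ∈ range n, x ^ (i + 1) * ((i : R) + 1)
      = ∑ i ∈ range n, x ^ (i + 1) - n * x ^ (n + 1) := by
  induction n with
  | zero => simp
  | succ n ih => rw [sum_range_succ, sum_range_succ, mul_add, ih]; push_cast; ring

lemma sum_range_inv_pow_succ_mul_pow {F : Type*} [Field F] {r : F} (hr : r ≠ 0) (n : ℕ) :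
    (∑ i ∈ range n, r⁻¹ ^ (i + 1)) * r ^ n = ∑ i ∈ range n, r ^ i := by
  rw [sum_mul, ← sum_range_reflect (fun i => r ^ i)]
  refine sum_congr rfl fun i hi => ?_
  have hsplit : r ^ n = r ^ (i + 1) * r ^ (n - 1 - i) := by
    rw [← pow_add]; congr 1; have := mem_range.1 hi; omega
  rw [hsplit, inv_pow, inv_mul_cancel_left₀ (pow_ne_zero _ hr)]

section Root

variable {K : ℕ} {r : ℝ} (hr : 1 < r) (hroot : r ^ (K + 1) = ∑ i ∈ range (K + 1), r ^ i)
include hr hroot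

lemma sum_inv_pow_succ_eq_one : ∑ i ∈ range (K + 1), r⁻¹ ^ (i + 1) = 1 := by
  have h := sum_range_inv_pow_succ_mul_pow (r := r) (by positivity) (K + 1)
  rw [← hroot] at h
  exact (mul_eq_right₀ (by positivity)).1 h

lemma sum_tailSum_inv_pow_mul_sub_one :
    (∑ j ∈ range (K + 1), tailSum (fun i => r⁻¹ ^ (i + 1)) (K + 1) j) * (r - 1)
      = (K + 2) * r - 2 * (K + 1) := by
  have hsum := sum_inv_pow_succ_eq_one hr hroot
  set x := r⁻¹
  have hmean := sum_tailSum_mul_pow (fun i => x ^ (i + 1)) (K + 1) 1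
  simp only [one_pow, sum_const, card_range, nsmul_eq_mul, mul_one, Nat.cast_add,
    Nat.cast_one] at hmean
  set μ := ∑ j ∈ range (K + 1), tailSum (fun i => x ^ (i + 1)) (K + 1) j
  have hxr : x * r = 1 := inv_mul_cancel₀ (by positivity)
  have hμ : (1 - x) * μ = 1 - (K + 1) * x ^ (K + 2) := by
    rw [hmean, one_sub_mul_sum_range_succ_mul_pow_succ, hsum]; push_cast; ring
  have hpow : x ^ (K + 2) = 2 * x - 1 := by
    have hgeom := mul_neg_geom_sum x (K + 1)
    have hshift : ∑ i ∈ range (K + 1), x ^ (i + 1) = x * ∑ i ∈ range (K + 1), x ^ i := by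
      rw [mul_sum]; exact sum_congr rfl fun i _ => pow_succ' x i
    linear_combination x * hgeom + (1 - x) * hshift - (1 - x) * hsum
  linear_combination r * hμ - (K + 1) * r * hpow + (μ - 2 * (K + 1)) * hxr

lemma one_sub_inv_mul_sum_tailSum_one_mul_inv_pow :
    (1 - r⁻¹) * ∑ j ∈ range (K + 1), tailSum (fun _ => (1 : ℝ)) (K + 1) j * r⁻¹ ^ j = K := by
  rw [sum_tailSum_mul_pow, mul_sum, sum_congr rfl fun i _ => by rw [one_mul, mul_neg_geom_sum],
    sum_sub_distrib, sum_inv_pow_succ_eq_one hr hroot]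
  simp

lemma tendsto_sum_range_mul_inv_pow_mul {s : ℕ → ℝ} (hK : K ≠ 0)
    (hs : RenewalEq (fun _ => 1) (K + 1) s) (hs0 : s 0 = 1) :
    Tendsto (fun n => (∑ i ∈ range (n + 1), s i) * r⁻¹ ^ n * ((K + 2) * r - 2 * (K + 1)))
      atTop (𝓝 r) := by
  have hx : 0 < r⁻¹ := inv_pos.2 (by linarith)
  have hu : RenewalEq (fun j => r⁻¹ ^ (j + 1)) (K + 1) (fun n => s n * r⁻¹ ^ n) := by
    simpa using hs.mul_pow r⁻¹
  have hsum := sum_inv_pow_succ_eq_one hr hroot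
  have hlim := hs.tendsto_sum_range_mul_pow (by simpa [tailSum] using hK)
    (tendsto_pow_atTop_nhds_zero_of_lt_one hx.le (inv_lt_one_of_one_lt₀ hr))
    (hu.tendsto_inv_sum_tailSum (fun j _ => by positivity) hsum (by simp [hs0]))
  convert hlim.mul_const ((K + 2) * r - 2 * (K + 1)) using 2
  have hA := one_sub_inv_mul_sum_tailSum_one_mul_inv_pow hr hroot
  have hμ := sum_tailSum_inv_pow_mul_sub_one hr hroot
  have hμ1 := one_le_sum_tailSum (fun j _ => (pow_pos hx (j + 1)).le) hsum
  have hT : tailSum (fun _ => (1 : ℝ)) (K + 1) 0 = K + 1 := by simp [tailSum]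
  generalize ∑ j ∈ range (K + 1), tailSum (fun _ => (1 : ℝ)) (K + 1) j * r⁻¹ ^ j = A at hA ⊢
  generalize ∑ j ∈ range (K + 1), tailSum (fun j => r⁻¹ ^ (j + 1)) (K + 1) j = μ at hμ hμ1 ⊢
  have hK' : (K : ℝ) ≠ 0 := Nat.cast_ne_zero.2 hK
  have hxr : r⁻¹ * r = 1 := inv_mul_cancel₀ (by positivity)
  rw [hT, add_sub_cancel_right, ← hμ]
  field_simp
  linear_combination -r * hA - A * hxr

end Root

abbrev BoundedComposition (K n : ℕ) : Type := {l : List ℕ // (∀ x ∈ l, 1 ≤ x ∧ x ≤ K) ∧ l.sum = n}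

namespace BoundedComposition

variable {K : ℕ}

def cons (K n : ℕ)
    (a : Σ j : Fin K, {l : List ℕ // (∀ x ∈ l, 1 ≤ x ∧ x ≤ K) ∧ l.sum + j = n}) :
    BoundedComposition K (n + 1) :=
  ⟨(a.1 + 1) :: a.2.1, List.forall_mem_cons.2 ⟨⟨by omega, by omega⟩, a.2.2.1⟩, by
    have := a.2.2.2; simp only [List.sum_cons]; omega⟩

lemma cons_bijective (n : ℕ) : Function.Bijective (cons K n) := by
  constructor
  · rintro ⟨j, l, hl⟩ ⟨j', l', hl'⟩ h
    simp only [cons, Subtype.mk.injEq, List.cons.injEq, add_left_inj] at h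
    obtain ⟨hj, rfl⟩ := h
    obtain rfl := Fin.ext hj
    rfl
  · rintro ⟨_ | ⟨a, l⟩, hl, hs⟩
    · simp at hs
    · obtain ⟨⟨ha₁, ha₂⟩, hl⟩ := List.forall_mem_cons.1 hl
      simp only [List.sum_cons] at hs
      exact ⟨⟨⟨a - 1, by omega⟩, l, hl, by simp only; omega⟩, by simp only [cons, Subtype.mk.injEq, List.cons.injEq, and_true]; omega⟩

lemma finite_of_sum_add_eq (n j : ℕ) [Finite (BoundedComposition K (n - j))] :
    Finite {l : List ℕ // (∀ x ∈ l, 1 ≤ x ∧ x ≤ K) ∧ l.sum + j = n} :=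
  Finite.of_injective (fun l => (⟨l.1, l.2.1, by omega⟩ : BoundedComposition K (n - j)))
    fun _ _ h => Subtype.ext (congrArg Subtype.val h :)

lemma card_zero : Nat.card (BoundedComposition K 0) = 1 := by
  refine Nat.card_eq_one_iff_exists.2 ⟨⟨[], by simp⟩, fun ⟨l, hl, hs⟩ => ?_⟩
  have hzero := List.sum_eq_zero_iff.1 hs
  have : l = [] := List.eq_nil_iff_forall_not_mem.2 fun x hx => by
    have := (hl x hx).1; have := hzero x hx; omega
  subst this; rfl

instance finite (n : ℕ) : Finite (BoundedComposition K n) := by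
  induction n using Nat.strong_induction_on with
  | _ n ih =>
    cases n with
    | zero => exact Nat.finite_of_card_ne_zero (by simp [card_zero])
    | succ n =>
      have (j : Fin K) := have := ih (n - j) (by omega); finite_of_sum_add_eq (K := K) n j
      exact Finite.of_surjective _ (cons_bijective n).2

lemma card_succ (n : ℕ) : Nat.card (BoundedComposition K (n + 1))
    = ∑ j ∈ range K, lag (fun i => Nat.card (BoundedComposition K i)) n j := by
  have (j : Fin K) := finite_of_sum_add_eq (K := K) n j
  rw [← Nat.card_eq_of_bijective _ (cons_bijective n), Nat.card_sigma, ← Fin.sum_univ_eq_sum_range]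
  refine sum_congr rfl fun j _ => ?_
  unfold lag
  split_ifs with hj
  · exact Nat.card_congr (Equiv.subtypeEquivRight fun l => and_congr_right' (by omega))
  · have : IsEmpty {l : List ℕ // (∀ x ∈ l, 1 ≤ x ∧ x ≤ K) ∧ l.sum + j = n} :=
      ⟨fun l => by have := l.2.2; omega⟩
    exact Nat.card_of_isEmpty

lemma renewalEq_card {S : ℕ → ℕ} (hS : ∀ i, S i = Nat.card (BoundedComposition K i)) :
    S 0 = 1 ∧ RenewalEq (fun _ => 1) K S := by
  obtain rfl : S = fun i => Nat.card (BoundedComposition K i) := funext hS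
  exact ⟨card_zero, fun n => by simp [card_succ]⟩

end BoundedComposition

/-- Asymptotics of the growth function of the 2-valued coset group of
`ℤ/m * ℤ/m` for `m ≥ 3`: with `r > 1` the real root of
`λ^(m-1) - λ^(m-2) - ⋯ - λ - 1`, with `S i` the number of compositions of `i`
into parts from `{1, …, m-1}` and `ξ k = ∑_{i=0}^{k} S i`, one has
`ξ k ∼ r^(k+1) / (m r - 2 (m - 1))` as `k → ∞`. -/
theorem growth_Zm_Zm_asymptotics (m : ℕ) (hm : 3 ≤ m) (r : ℝ) (hr : 1 < r)
    (hroot : r ^ (m - 1) - ∑ i ∈ Finset.range (m - 1), r ^ i = 0)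
    (S : ℕ → ℕ)
    (hS : ∀ i : ℕ, S i = Nat.card {l : List ℕ // (∀ x ∈ l, 1 ≤ x ∧ x ≤ m - 1) ∧ l.sum = i})
    (ξ : ℕ → ℕ) (hξ : ∀ k : ℕ, ξ k = ∑ i ∈ Finset.range (k + 1), S i) :
    Filter.Tendsto
      (fun k : ℕ => (ξ k : ℝ) * ((m : ℝ) * r - 2 * ((m : ℝ) - 1)) / r ^ (k + 1))
      Filter.atTop (nhds 1) := by
  obtain ⟨K, rfl⟩ : ∃ K, m = K + 2 := ⟨m - 2, by omega⟩
  obtain ⟨hS0, hSrec⟩ := BoundedComposition.renewalEq_card hS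
  have hs : RenewalEq (fun _ => (1 : ℝ)) (K + 1) (fun n => (S n : ℝ)) := by
    simpa [Function.comp_def] using hSrec.map (Nat.castRingHom ℝ)
  have hlim := tendsto_sum_range_mul_inv_pow_mul hr (sub_eq_zero.1 hroot) (by omega) hs
    (by simp [hS0])
  convert hlim.div_const r using 2 with n
  · rw [hξ, inv_pow]
    push_cast
    field_simp
    ring
  · exact (div_self (by positivity)).symm
end

section
/- Let w be a cubeless word over {a, b} of length m ≥ 2. Then for every k ≥ 0, the number of cubeless words of length m + k having w as a prefix equals the Fibonacci number F_{k+2} if the last two letters of w are distinct, and equals F_{k+1} if the last two letters of w are equal. -/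
private lemma cubeless_prefix_exists_cons {w v : List Bool} (h : w <+: v)
    (hl : w.length < v.length) : ∃ c, w ++ [c] <+: v := by
  obtain ⟨t, rfl⟩ := h
  match t with
  | [] => simp at hl
  | c :: t' => exact ⟨c, t', by simp⟩

private lemma cubeless_finite (w : List Bool) (n : ℕ) :
    Finite {v : List Bool // v.length = n ∧ w <+: v ∧ ∀ c : Bool, ¬ [c, c, c] <:+: v} := by
  have h : Finite {v : List Bool // v.length = n} :=
    (List.finite_length_eq Bool n).to_subtype
  apply Finite.of_injective
    (fun x => (⟨x.1, x.2.1⟩ : {v : List Bool // v.length = n}))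
  intro x y hxy
  simp only [Subtype.mk.injEq] at hxy
  exact Subtype.ext hxy

private lemma cubeless_card_self (w : List Bool) (hc : ∀ c : Bool, ¬ [c, c, c] <:+: w) :
    Nat.card {v : List Bool //
      v.length = w.length ∧ w <+: v ∧ ∀ c : Bool, ¬ [c, c, c] <:+: v} = 1 := by
  rw [Nat.card_eq_one_iff_unique]
  refine ⟨⟨fun x y => ?_⟩, ⟨⟨w, rfl, List.prefix_rfl, hc⟩⟩⟩
  obtain ⟨v, hv, hp, _⟩ := x
  obtain ⟨v', hv', hp', _⟩ := y
  exact Subtype.ext ((hp.eq_of_length hv.symm).symm.trans (hp'.eq_of_length hv'.symm))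

private lemma cubeless_card_empty {w : List Bool} {d : Bool} (hd : [d, d, d] <:+: w) (n : ℕ) :
    Nat.card {v : List Bool //
      v.length = n ∧ w <+: v ∧ ∀ c : Bool, ¬ [c, c, c] <:+: v} = 0 := by
  have : IsEmpty {v : List Bool //
      v.length = n ∧ w <+: v ∧ ∀ c : Bool, ¬ [c, c, c] <:+: v} :=
    ⟨fun x => x.2.2.2 d (hd.trans x.2.2.1.isInfix)⟩
  exact Nat.card_of_isEmpty

private lemma cubeless_card_split (w : List Bool) (n : ℕ) (hn : w.length < n) :
    Nat.card {v : List Bool //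
        v.length = n ∧ w <+: v ∧ ∀ c : Bool, ¬ [c, c, c] <:+: v} =
      Nat.card {v : List Bool //
        v.length = n ∧ w ++ [true] <+: v ∧ ∀ c : Bool, ¬ [c, c, c] <:+: v} +
      Nat.card {v : List Bool //
        v.length = n ∧ w ++ [false] <+: v ∧ ∀ c : Bool, ¬ [c, c, c] <:+: v} := by
  haveI := cubeless_finite (w ++ [true]) n
  haveI := cubeless_finite (w ++ [false]) n
  rw [← Nat.card_sum]
  refine Nat.card_congr ⟨fun x => ?_, fun y => ?_, ?_, ?_⟩
  · by_cases h : w ++ [true] <+: x.1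
    · exact Sum.inl ⟨x.1, x.2.1, h, x.2.2.2⟩
    · refine Sum.inr ⟨x.1, x.2.1, ?_, x.2.2.2⟩
      obtain ⟨c, hc⟩ := cubeless_prefix_exists_cons x.2.2.1 (lt_of_lt_of_eq hn x.2.1.symm)
      cases c
      · exact hc
      · exact absurd hc h
  · rcases y with y | y
    · exact ⟨y.1, y.2.1, (w.prefix_append [true]).trans y.2.2.1, y.2.2.2⟩
    · exact ⟨y.1, y.2.1, (w.prefix_append [false]).trans y.2.2.1, y.2.2.2⟩
  · intro x
    by_cases h : w ++ [true] <+: x.1 <;> simp [h]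
  · rintro (y | y)
    · simp [y.2.2.1]
    · have hne : ¬ w ++ [true] <+: y.1 := by
        intro h
        have := (List.prefix_of_prefix_length_le h y.2.2.1 (by simp)).eq_of_length (by simp)
        simp at this
      simp [hne]

private lemma cubeless_cube_ext {u : List Bool} {a b c : Bool}
    (hcube : ∀ d : Bool, ¬ [d, d, d] <:+: u ++ [a, b]) (h : ¬ (a = b ∧ b = c))
    (d : Bool) : ¬ [d, d, d] <:+: (u ++ [a, b]) ++ [c] := by
  intro hd
  rw [← List.reverse_infix] at hd
  simp only [List.reverse_append, List.reverse_cons, List.reverse_nil, List.nil_append,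
    List.cons_append, List.append_assoc] at hd
  rcases List.infix_cons_iff.mp hd with hp | hi
  · rcases hp with ⟨t, ht⟩
    simp only [List.cons_append, List.cons.injEq] at ht
    exact h ⟨ht.2.2.1.symm.trans ht.2.1, ht.2.1.symm.trans ht.1⟩
  · apply hcube d
    rw [← List.reverse_infix]
    simpa using hi

/-- Subtrees of the tree of cubeless words grow like Fibonacci: if `w` is a
cubeless word over `{a, b}` (encoded as `Bool`) of length `m ≥ 2` with last two
letters `a`, `b` (so `w = u ++ [a, b]`), then for every `k` the number of
cubeless words of length `m + k` having `w` as a prefix equals `F (k + 2)` when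
the last two letters are distinct, and `F (k + 1)` when they are equal. -/
theorem cubeless_subtree_fibonacci (w : List Bool) (m : ℕ) (hm : 2 ≤ m)
    (hlen : w.length = m) (hcube : ∀ c : Bool, ¬ [c, c, c] <:+: w)
    (u : List Bool) (a b : Bool) (hw : w = u ++ [a, b]) (k : ℕ) :
    Nat.card {v : List Bool //
        v.length = m + k ∧ w <+: v ∧ ∀ c : Bool, ¬ [c, c, c] <:+: v} =
      if a ≠ b then Nat.fib (k + 2) else Nat.fib (k + 1) := by
  induction k generalizing w m u a b with
  | zero =>
    subst hlen
    simp only [Nat.add_zero]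
    rw [cubeless_card_self w hcube]
    split_ifs <;> rfl
  | succ k ih =>
    rw [cubeless_card_split w (m + (k + 1)) (by omega)]
    have key : ∀ c : Bool,
        Nat.card {v : List Bool //
          v.length = m + (k + 1) ∧ w ++ [c] <+: v ∧ ∀ d : Bool, ¬ [d, d, d] <:+: v} =
        if a = b ∧ b = c then 0 else if b ≠ c then Nat.fib (k + 2) else Nat.fib (k + 1) := by
      intro c
      by_cases hab : a = b ∧ b = c
      · rw [if_pos hab]
        refine cubeless_card_empty (d := b) ?_ _
        refine List.IsSuffix.isInfix ⟨u, ?_⟩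
        rw [hw, hab.1, ← hab.2]
        simp
      · rw [if_neg hab]
        have hc : ∀ d : Bool, ¬ [d, d, d] <:+: w ++ [c] := by
          rw [hw]; exact cubeless_cube_ext (hw ▸ hcube) hab
        have := ih (w ++ [c]) (m + 1) (by omega) (by simp [hlen]) hc (u ++ [a]) b c
          (by simp [hw])
        rw [show m + 1 + k = m + (k + 1) by omega] at this
        exact this
    rw [key true, key false, show k + 1 + 2 = k + 3 by omega, show k + 1 + 1 = k + 2 by omega]
    have hf : Nat.fib (k + 3) = Nat.fib (k + 1) + Nat.fib (k + 2) := by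
      rw [show k + 3 = (k + 1) + 2 by omega, show k + 2 = (k + 1) + 1 by omega]
      exact Nat.fib_add_two
    cases a <;> cases b <;> simp <;> omega
end
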